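/- arXiv:1901.01518 — 2 statements merged into one kernel-verified Lean document; each statement's English description precedes it below -/
import Mathlib

section
/- Let N ≥ 3 and b > 2 with N > b. Define V(x) = 1/(1+|x|^b) on ℝ^N. Then there exist constants c, C > 0 such that for all |x| > 1, c·|x|^{1-b} ≤ I₁V(x) ≤ C·|x|^{1-b}. -/
/-!
Substituting `y = ‖x‖ • z` gives `∫ V y / ‖x - y‖ ^ (N - 1) dy = ‖x‖ ^ (1 - b) * F (‖x‖ ^ (-b))`
with `F t = ∫ (t + ‖z‖ ^ b)⁻¹ * ‖e - z‖ ^ (1 - N) dz` and `e = ‖x‖⁻¹ • x`; a reflection taking `e`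
to a fixed unit vector shows that `F` does not depend on `e`. As `F` is antitone on `[0, ∞)` and
`‖x‖ ^ (-b) ∈ [0, 1]` for `‖x‖ > 1`, `F (‖x‖ ^ (-b))` lies between `F 1 > 0` and
`F 0 = ∫ ‖z‖ ^ (-b) * ‖e - z‖ ^ (1 - N) dz`, which is finite because `b < N` (near `0`),
`N - 1 < N` (near `e`) and `b + N - 1 > N` (at infinity).
-/

open MeasureTheory Real Metric Set Module

section Integrability

variable {E : Type*} [NormedAddCommGroup E] [NormedSpace ℝ E] [FiniteDimensional ℝ E]
  [MeasurableSpace E] [BorelSpace E] (μ : Measure E) [μ.IsAddHaarMeasure]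

theorem integrableOn_ball_norm_rpow [Nontrivial E] {p : ℝ} (hp : -(finrank ℝ E : ℝ) < p) {r : ℝ}
    (hr : 0 < r) : IntegrableOn (fun z ↦ ‖z‖ ^ p) (ball (0 : E) r) μ := by
  rw [integrableOn_fun_norm_addHaar μ (f := fun y ↦ y ^ p)]
  have hn : 1 ≤ finrank ℝ E := finrank_pos
  refine ((intervalIntegral.integrableOn_Ioo_rpow_iff (s := (finrank ℝ E : ℝ) - 1 + p) hr).2
    (by linarith)).congr_fun (fun y hy ↦ ?_) measurableSet_Ioo
  dsimp only
  rw [smul_eq_mul, rpow_add hy.1, ← rpow_natCast, Nat.cast_sub hn, Nat.cast_one]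

theorem integrableOn_compl_ball_norm_rpow {p : ℝ} (hp : p < -(finrank ℝ E : ℝ)) {r : ℝ}
    (hr : 0 < r) : IntegrableOn (fun z ↦ ‖z‖ ^ p) (ball (0 : E) r)ᶜ μ := by
  have hp0 : p ≤ 0 := by linarith [(finrank ℝ E).cast_nonneg (α := ℝ)]
  have hc : 0 < (1 + r⁻¹) ^ p := by positivity
  refine ((integrable_one_add_norm (μ := μ) (r := -p) (by linarith)).const_mul
    ((1 + r⁻¹) ^ p)⁻¹).integrableOn.mono' (measurable_norm.pow_const p).aestronglyMeasurable ?_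
  refine ae_restrict_of_forall_mem measurableSet_ball.compl fun z hz ↦ ?_
  have hz : r ≤ ‖z‖ := by simpa using hz
  have hz0 : 0 < ‖z‖ := hr.trans_le hz
  rw [norm_of_nonneg (by positivity), neg_neg, le_inv_mul_iff₀ hc, ← mul_rpow (by positivity)
    hz0.le]
  refine rpow_le_rpow_of_nonpos (by positivity) ?_ hp0
  have : 1 ≤ ‖z‖ / r := (one_le_div hr).2 hz
  rw [add_mul, one_mul, inv_mul_eq_div]
  linarith

theorem integrableOn_ball_norm_sub_rpow [Nontrivial E] {p : ℝ} (hp : -(finrank ℝ E : ℝ) < p)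
    (e : E) {r : ℝ} (hr : 0 < r) : IntegrableOn (fun z ↦ ‖e - z‖ ^ p) (ball e r) μ := by
  have hball : (fun z ↦ e - z) ⁻¹' ball 0 r = ball e r := by
    ext z
    simp [dist_eq_norm, norm_sub_rev]
  rw [← hball]
  exact ((Measure.measurePreserving_sub_left μ e).integrableOn_comp_preimage
    (MeasurableEquiv.subLeft e).measurableEmbedding).2 (integrableOn_ball_norm_rpow μ hp hr)

theorem integrable_norm_rpow_mul_norm_sub_rpow [Nontrivial E] {a c : ℝ} (ha : 0 ≤ a) (hc : 0 ≤ c)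
    (haE : a < finrank ℝ E) (hcE : c < finrank ℝ E) (hacE : finrank ℝ E < a + c) {e : E}
    (he : e ≠ 0) : Integrable (fun z ↦ ‖z‖ ^ (-a) * ‖e - z‖ ^ (-c)) μ := by
  obtain ⟨r, hr, hre⟩ : ∃ r, 0 < r ∧ ‖e‖ = 2 * r := ⟨‖e‖ / 2, by positivity, by ring⟩
  have hm : AEStronglyMeasurable (fun z ↦ ‖z‖ ^ (-a) * ‖e - z‖ ^ (-c)) μ :=
    ((measurable_norm.pow_const _).mul
      ((measurable_const.sub measurable_id).norm.pow_const _)).aestronglyMeasurable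
  have hnorm : ∀ z, ‖‖z‖ ^ (-a) * ‖e - z‖ ^ (-c)‖ = ‖z‖ ^ (-a) * ‖e - z‖ ^ (-c) := fun z ↦
    norm_of_nonneg (by positivity)
  rw [← integrableOn_univ, ← union_compl_self (ball 0 r ∪ ball e r)]
  refine (IntegrableOn.union ?_ ?_).union ?_
  · refine ((integrableOn_ball_norm_rpow μ (p := -a) (by linarith) hr).mul_const (r ^ (-c))).mono'
      hm.restrict (ae_restrict_of_forall_mem measurableSet_ball fun z hz ↦ ?_)
    have hz : ‖z‖ < r := by simpa using hz
    have hez : r ≤ ‖e - z‖ := by linarith [norm_sub_norm_le e z]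
    rw [hnorm]
    exact mul_le_mul_of_nonneg_left (rpow_le_rpow_of_nonpos hr hez (neg_nonpos.2 hc))
      (rpow_nonneg (norm_nonneg _) _)
  · refine ((integrableOn_ball_norm_sub_rpow μ (p := -c) (by linarith) e hr).const_mul
      (r ^ (-a))).mono' hm.restrict (ae_restrict_of_forall_mem measurableSet_ball fun z hz ↦ ?_)
    have hez : ‖e - z‖ < r := by simpa [dist_eq_norm, norm_sub_rev] using hz
    have hz : r ≤ ‖z‖ := by linarith [norm_sub_norm_le e z]
    rw [hnorm]
    exact mul_le_mul_of_nonneg_right (rpow_le_rpow_of_nonpos hr hz (neg_nonpos.2 ha))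
      (rpow_nonneg (norm_nonneg _) _)
  · have hint : IntegrableOn (fun z ↦ (3 : ℝ)⁻¹ ^ (-c) * ‖z‖ ^ (-a + -c)) (ball 0 r)ᶜ μ :=
      (integrableOn_compl_ball_norm_rpow μ (p := -a + -c) (by linarith) hr).const_mul _
    refine (hint.mono_set (compl_subset_compl.2 subset_union_left)).mono' hm.restrict
      (ae_restrict_of_forall_mem (measurableSet_ball.union measurableSet_ball).compl fun z hz ↦ ?_)
    simp only [mem_compl_iff, mem_union, mem_ball, dist_eq_norm, sub_zero, not_or, not_lt] at hz
    obtain ⟨hz, hze⟩ := hz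
    have hz0 : 0 < ‖z‖ := hr.trans_le hz
    have hez : 3⁻¹ * ‖z‖ ≤ ‖e - z‖ := by
      rw [norm_sub_rev]
      linarith [norm_sub_norm_le z e]
    rw [hnorm, rpow_add hz0, mul_left_comm, ← mul_rpow (by norm_num) hz0.le]
    exact mul_le_mul_of_nonneg_left (rpow_le_rpow_of_nonpos (by positivity) hez
      (neg_nonpos.2 hc)) (rpow_nonneg hz0.le _)

end Integrability

section Rotation

variable {E : Type*} [NormedAddCommGroup E] [InnerProductSpace ℝ E] [FiniteDimensional ℝ E]
  [MeasurableSpace E] [BorelSpace E]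

theorem integral_comp_norm_mul_comp_norm_sub_of_norm_eq (h k : ℝ → ℝ) {e e' : E}
    (he : ‖e‖ = ‖e'‖) :
    ∫ z, h ‖z‖ * k ‖e - z‖ = ∫ z, h ‖z‖ * k ‖e' - z‖ := by
  have hT := Submodule.reflection_sub he
  set T := (ℝ ∙ (e - e'))ᗮ.reflection
  rw [← (T.measurePreserving).integral_comp' (f := T.toMeasurableEquiv)
    (fun z ↦ h ‖z‖ * k ‖e' - z‖)]
  congr 1 with z
  rw [LinearIsometryEquiv.coe_toMeasurableEquiv, T.norm_map, ← hT, ← map_sub, T.norm_map]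

end Rotation

section Monotonicity

variable {E : Type*} [NormedAddCommGroup E] [MeasurableSpace E]
  {μ : Measure E} [NullSingletonClass μ] {b : ℝ} {k : E → ℝ}

theorem ae_inv_add_rpow_mul_le (hk : 0 ≤ k) {t t' : ℝ} (ht : 0 ≤ t) (htt' : t ≤ t') :
    ∀ᵐ z ∂μ, (t' + ‖z‖ ^ b)⁻¹ * k z ≤ (t + ‖z‖ ^ b)⁻¹ * k z := by
  filter_upwards [Measure.ae_ne μ 0] with z hz
  have : 0 < ‖z‖ ^ b := rpow_pos_of_pos (norm_pos_iff.2 hz) b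
  gcongr
  exact hk z

theorem integrable_inv_add_rpow_mul [BorelSpace E] (hk : 0 ≤ k) (hkm : AEStronglyMeasurable k μ)
    (hint : Integrable (fun z ↦ (‖z‖ ^ b)⁻¹ * k z) μ) {t : ℝ} (ht : 0 ≤ t) :
    Integrable (fun z ↦ (t + ‖z‖ ^ b)⁻¹ * k z) μ := by
  have hm : Measurable fun z : E ↦ (t + ‖z‖ ^ b)⁻¹ := by fun_prop
  refine hint.mono' (hm.aestronglyMeasurable.mul hkm) ?_
  filter_upwards [ae_inv_add_rpow_mul_le hk le_rfl ht] with z hz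
  rw [norm_of_nonneg (mul_nonneg (inv_nonneg.2 (by positivity)) (hk z))]
  simpa using hz

theorem antitoneOn_integral_inv_add_rpow_mul [BorelSpace E] (hk : 0 ≤ k)
    (hkm : AEStronglyMeasurable k μ) (hint : Integrable (fun z ↦ (‖z‖ ^ b)⁻¹ * k z) μ) :
    AntitoneOn (fun t ↦ ∫ z, (t + ‖z‖ ^ b)⁻¹ * k z ∂μ) (Ici 0) := fun _ ht _ ht' htt' ↦
  integral_mono_ae (integrable_inv_add_rpow_mul hk hkm hint ht')
    (integrable_inv_add_rpow_mul hk hkm hint ht) (ae_inv_add_rpow_mul_le hk ht htt')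

end Monotonicity

theorem integral_inv_add_rpow_mul_norm_sub_rpow_pos {E : Type*} [NormedAddCommGroup E]
    [Nontrivial E] [MeasurableSpace E] {μ : Measure E} [μ.IsOpenPosMeasure] {t : ℝ} (ht : 0 < t)
    (b c : ℝ) (e : E) (hint : Integrable (fun z ↦ (t + ‖z‖ ^ b)⁻¹ * ‖e - z‖ ^ (-c)) μ) :
    0 < ∫ z, (t + ‖z‖ ^ b)⁻¹ * ‖e - z‖ ^ (-c) ∂μ := by
  rw [integral_pos_iff_support_of_nonneg (fun z ↦ by positivity) hint]
  refine (isOpen_compl_singleton.measure_pos μ (exists_ne e)).trans_le (measure_mono fun z hz ↦ ?_)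
  have hez : 0 < ‖e - z‖ := norm_pos_iff.2 (sub_ne_zero.2 (Ne.symm hz))
  exact (mul_pos (inv_pos.2 (by positivity)) (rpow_pos_of_pos hez _)).ne'

theorem integral_one_div_one_add_rpow_div_norm_sub_rpow {E : Type*} [NormedAddCommGroup E]
    [NormedSpace ℝ E] [FiniteDimensional ℝ E] [MeasurableSpace E] [BorelSpace E]
    (μ : Measure E) [μ.IsAddHaarMeasure] {x : E} (hx : x ≠ 0) (b c : ℝ) :
    ∫ y, (1 / (1 + ‖y‖ ^ b)) / ‖x - y‖ ^ c ∂μ = ‖x‖ ^ ((finrank ℝ E : ℝ) - b - c) *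
      ∫ z, (‖x‖ ^ (-b) + ‖z‖ ^ b)⁻¹ * ‖‖x‖⁻¹ • x - z‖ ^ (-c) ∂μ := by
  set R := ‖x‖
  have hR : 0 < R := norm_pos_iff.2 hx
  have hscale := Measure.integral_comp_inv_smul_of_nonneg μ
    (fun z ↦ (1 / (1 + ‖R • z‖ ^ b)) / ‖x - R • z‖ ^ c) hR.le
  simp only [smul_inv_smul₀ hR.ne'] at hscale
  rw [hscale, smul_eq_mul, ← integral_const_mul, ← integral_const_mul]
  congr 1 with z
  have hRb : 0 < R ^ b := rpow_pos_of_pos hR b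
  have hsub : x - R • z = R • (R⁻¹ • x - z) := by rw [smul_sub, smul_inv_smul₀ hR.ne']
  rw [hsub, norm_smul, norm_smul, norm_of_nonneg hR.le, mul_rpow hR.le (norm_nonneg _),
    mul_rpow hR.le (norm_nonneg _), rpow_neg hR.le, rpow_neg (norm_nonneg _), rpow_sub hR,
    rpow_sub hR, rpow_natCast]
  have key : (1 + R ^ b * ‖z‖ ^ b)⁻¹ = (R ^ b)⁻¹ * ((R ^ b)⁻¹ + ‖z‖ ^ b)⁻¹ := by
    rw [← mul_inv, mul_add, mul_inv_cancel₀ hRb.ne']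
  simp only [div_eq_mul_inv, mul_inv, key]
  ring

theorem exists_mul_rpow_le_integral_le_mul_rpow {E : Type*} [NormedAddCommGroup E]
    [InnerProductSpace ℝ E] [FiniteDimensional ℝ E] [MeasurableSpace E] [BorelSpace E]
    [Nontrivial E] {b : ℝ} (hb : 1 < b) (hbE : b < finrank ℝ E) :
    ∃ c C : ℝ, 0 < c ∧ 0 < C ∧ ∀ x : E, 1 < ‖x‖ →
      c * ‖x‖ ^ (1 - b) ≤ ∫ y, (1 / (1 + ‖y‖ ^ b)) / ‖x - y‖ ^ ((finrank ℝ E : ℝ) - 1) ∧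
      ∫ y, (1 / (1 + ‖y‖ ^ b)) / ‖x - y‖ ^ ((finrank ℝ E : ℝ) - 1) ≤ C * ‖x‖ ^ (1 - b) := by
  set n : ℝ := (finrank ℝ E : ℝ)
  have hn : 1 ≤ n := Nat.one_le_cast.2 finrank_pos
  obtain ⟨e₀, he₀⟩ := exists_norm_eq E zero_le_one
  set F : ℝ → ℝ := fun t ↦ ∫ z, (t + ‖z‖ ^ b)⁻¹ * ‖e₀ - z‖ ^ (-(n - 1))
  have hk : 0 ≤ fun z ↦ ‖e₀ - z‖ ^ (-(n - 1)) := fun z ↦ rpow_nonneg (norm_nonneg _) _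
  have hkm : AEStronglyMeasurable (fun z ↦ ‖e₀ - z‖ ^ (-(n - 1))) :=
    ((measurable_const.sub measurable_id).norm.pow_const _).aestronglyMeasurable
  have hint : Integrable fun z ↦ (‖z‖ ^ b)⁻¹ * ‖e₀ - z‖ ^ (-(n - 1)) := by
    simp_rw [← rpow_neg (norm_nonneg _)]
    exact integrable_norm_rpow_mul_norm_sub_rpow volume (by linarith) (by linarith) hbE
      (by linarith) (by linarith) (norm_ne_zero_iff.1 (by rw [he₀]; exact one_ne_zero))
  have hanti := antitoneOn_integral_inv_add_rpow_mul hk hkm hint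
  have hF1 : 0 < F 1 := integral_inv_add_rpow_mul_norm_sub_rpow_pos one_pos b _ e₀
    (integrable_inv_add_rpow_mul hk hkm hint zero_le_one)
  have hF0 : F 1 ≤ F 0 := hanti self_mem_Ici (mem_Ici.2 zero_le_one) zero_le_one
  refine ⟨F 1, F 0, hF1, hF1.trans_le hF0, fun x hx ↦ ?_⟩
  have hx0 : x ≠ 0 := norm_pos_iff.1 (one_pos.trans hx)
  have hrot := integral_comp_norm_mul_comp_norm_sub_of_norm_eq (fun s ↦ (‖x‖ ^ (-b) + s ^ b)⁻¹)
    (fun s ↦ s ^ (-(n - 1))) (e := ‖x‖⁻¹ • x) (e' := e₀)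
    (by rw [norm_smul, norm_inv, norm_norm, inv_mul_cancel₀ (norm_ne_zero_iff.2 hx0), he₀])
  rw [integral_one_div_one_add_rpow_div_norm_sub_rpow volume hx0, hrot,
    show n - b - (n - 1) = 1 - b by ring]
  have ht0 : 0 ≤ ‖x‖ ^ (-b) := rpow_nonneg (norm_nonneg _) _
  have ht1 : ‖x‖ ^ (-b) ≤ 1 := rpow_le_one_of_one_le_of_nonpos hx.le (by linarith)
  have hpow : 0 ≤ ‖x‖ ^ (1 - b) := rpow_nonneg (norm_nonneg _) _
  rw [mul_comm (F 1), mul_comm (F 0)]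
  exact ⟨mul_le_mul_of_nonneg_left (hanti ht0 (mem_Ici.2 zero_le_one) ht1) hpow,
    mul_le_mul_of_nonneg_left (hanti self_mem_Ici ht0 ht0) hpow⟩

/-- For `N ≥ 3`, `2 < b < N`, `V x = 1/(1+|x|^b)`, one has
`I₁V(x) ≍ |x|^(1-b)` for `|x| > 1`. -/
theorem stmt1 (N : ℕ) (hN : 3 ≤ N) (b : ℝ) (hb : 2 < b) (hbN : b < N) :
    ∃ c C : ℝ, 0 < c ∧ 0 < C ∧
      ∀ x : EuclideanSpace ℝ (Fin N), 1 < ‖x‖ →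
        c * ‖x‖ ^ (1 - b) ≤
          (Real.Gamma (((N : ℝ) - 1) / 2) /
              (π ^ ((N : ℝ) / 2) * 2 * Real.Gamma (1 / 2))) *
            ∫ y : EuclideanSpace ℝ (Fin N),
              (1 / (1 + ‖y‖ ^ b)) / ‖x - y‖ ^ ((N : ℝ) - 1) ∧
        (Real.Gamma (((N : ℝ) - 1) / 2) /
              (π ^ ((N : ℝ) / 2) * 2 * Real.Gamma (1 / 2))) *
            ∫ y : EuclideanSpace ℝ (Fin N),
              (1 / (1 + ‖y‖ ^ b)) / ‖x - y‖ ^ ((N : ℝ) - 1) ≤ C * ‖x‖ ^ (1 - b) := by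
  have : Nontrivial (EuclideanSpace ℝ (Fin N)) :=
    Module.nontrivial_of_finrank_pos (by rw [finrank_euclideanSpace_fin]; omega)
  obtain ⟨c, C, hc, hC, hbounds⟩ := exists_mul_rpow_le_integral_le_mul_rpow
    (E := EuclideanSpace ℝ (Fin N)) (by linarith) (by rwa [finrank_euclideanSpace_fin])
  rw [finrank_euclideanSpace_fin] at hbounds
  have hcN : 0 < Real.Gamma (((N : ℝ) - 1) / 2) / (π ^ ((N : ℝ) / 2) * 2 * Real.Gamma (1 / 2)) := by
    have := Real.Gamma_pos_of_pos (s := ((N : ℝ) - 1) / 2) (by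
      have : (3 : ℝ) ≤ N := by exact_mod_cast hN
      linarith)
    have := Real.Gamma_pos_of_pos (s := 1 / 2) (by norm_num)
    positivity
  refine ⟨_ * c, _ * C, mul_pos hcN hc, mul_pos hcN hC, fun x hx ↦ ?_⟩
  obtain ⟨hlow, hup⟩ := hbounds x hx
  rw [mul_assoc _ c, mul_assoc _ C]
  exact ⟨mul_le_mul_of_nonneg_left hlow hcN.le, mul_le_mul_of_nonneg_left hup hcN.le⟩
end

section
/- Let N ≥ 3 and b > N. Let V(x) = 1/(1+|x|^b) on ℝ^N. Then there exists a constant C = C(N,b) > 0 such that I₁[(I₁V)²](x) ≤ C·I₁V(x) for all x ∈ ℝ^N, where I₁ denotes the Riesz potential of order 1. -/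
/-!
Write `⟨x⟩ = max 1 ‖x‖` and `n = dim E`. The heart of the matter is the estimate
`∫ ⟨z⟩^(-a) ‖x - z‖^(-s) dz ≤ C ⟨x⟩^(-s)` for `0 ≤ s < n < a`: split the integral at the ball
of radius `R ≍ ⟨x⟩` around `x`. Inside it `⟨z⟩ ≥ R` and the kernel integrates to `≍ R^(n-s)`;
outside it the kernel is at most `R^(-s)` and the weight is integrable.
With `a = b` and `s = N - 1` this gives `I₁V ≍ ⟨x⟩^(1-N)` (the lower bound because `V ≥ 1/2`
on the unit ball), hence `(I₁V)² ≲ ⟨z⟩^(2-2N)`; as `2N - 2 > N` the estimate applies once more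
and yields `I₁[(I₁V)²] ≲ ⟨x⟩^(1-N) ≲ I₁V`.
-/

open MeasureTheory Real Set Metric Module Filter

noncomputable section

/-- The Riesz potential `I_α f` of the paper is `c(n, α) • rieszIntegral volume (n - α) f`. -/
def rieszIntegral {E : Type*} [NormedAddCommGroup E] [MeasurableSpace E] (μ : Measure E)
    (s : ℝ) (f : E → ℝ) (x : E) : ℝ :=
  ∫ y, f y / ‖x - y‖ ^ s ∂μ

section RieszIntegral

variable {E : Type*} [NormedAddCommGroup E] [MeasurableSpace E] {μ : Measure E} {s : ℝ}

theorem rieszIntegral_nonneg {f : E → ℝ} (hf : ∀ y, 0 ≤ f y) (x : E) :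
    0 ≤ rieszIntegral μ s f x :=
  integral_nonneg fun y => div_nonneg (hf y) (rpow_nonneg (norm_nonneg _) _)

theorem rieszIntegral_le_mul_of_le {f g : E → ℝ} {A : ℝ} {x : E} (hf : ∀ y, 0 ≤ f y)
    (hfg : ∀ y, f y ≤ A * g y) (hg : Integrable (fun y => g y / ‖x - y‖ ^ s) μ) :
    rieszIntegral μ s f x ≤ A * rieszIntegral μ s g x := by
  rw [rieszIntegral, rieszIntegral, ← integral_const_mul]
  refine integral_mono_of_nonneg (.of_forall fun y => ?_) (hg.const_mul A) (.of_forall fun y => ?_)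
  · exact div_nonneg (hf y) (rpow_nonneg (norm_nonneg _) _)
  · dsimp only
    rw [← mul_div_assoc]
    exact div_le_div_of_nonneg_right (hfg y) (rpow_nonneg (norm_nonneg _) _)

end RieszIntegral

theorem le_rieszIntegral_of_le_on_ball {E : Type*} [NormedAddCommGroup E] [ProperSpace E]
    [MeasurableSpace E] [OpensMeasurableSpace E] {μ : Measure E} [NullSingletonClass μ]
    [IsFiniteMeasureOnCompacts μ] {f : E → ℝ} {c s : ℝ} (hs : 0 ≤ s) (hf : ∀ y, 0 ≤ f y)
    (hc : ∀ y ∈ ball (0 : E) 1, c ≤ f y) {x : E}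
    (hint : Integrable (fun y => f y / ‖x - y‖ ^ s) μ) :
    c * μ.real (ball 0 1) / (2 * max 1 ‖x‖) ^ s ≤ rieszIntegral μ s f x := by
  set D := 2 * max 1 ‖x‖
  have hle : ∀ᵐ y ∂μ.restrict (ball 0 1), c / D ^ s ≤ f y / ‖x - y‖ ^ s := by
    filter_upwards [ae_restrict_mem measurableSet_ball,
      ae_restrict_of_ae (compl_mem_ae_iff.2 (measure_singleton x))] with y hy hyx
    have hxy : 0 < ‖x - y‖ := norm_pos_iff.2 (sub_ne_zero.2 (Ne.symm hyx))
    have hD : ‖x - y‖ ≤ D := by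
      rw [mem_ball_zero_iff] at hy
      linarith [norm_sub_le x y, le_max_left 1 ‖x‖, le_max_right 1 ‖x‖]
    calc c / D ^ s ≤ f y / D ^ s := div_le_div_of_nonneg_right (hc y hy) (by positivity)
      _ ≤ f y / ‖x - y‖ ^ s :=
        div_le_div_of_nonneg_left (hf y) (by positivity) (rpow_le_rpow hxy.le hD hs)
  calc c * μ.real (ball 0 1) / D ^ s = ∫ _ in ball (0 : E) 1, c / D ^ s ∂μ := by
        rw [setIntegral_const, smul_eq_mul, mul_comm c, mul_div_assoc]
    _ ≤ ∫ y in ball (0 : E) 1, f y / ‖x - y‖ ^ s ∂μ :=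
        integral_mono_ae (integrableOn_const measure_ball_lt_top.ne) hint.integrableOn hle
    _ ≤ rieszIntegral μ s f x :=
        setIntegral_le_integral hint (.of_forall fun y => by have := hf y; positivity)

theorem one_div_one_add_rpow_le_one_div_max_one_rpow {t b : ℝ} (ht : 0 ≤ t) :
    1 / (1 + t ^ b) ≤ 1 / max 1 t ^ b := by
  refine one_div_le_one_div_of_le (by positivity) ?_
  rcases le_total t 1 with h | h
  · rw [max_eq_left h, one_rpow]
    linarith [rpow_nonneg ht b]
  · rw [max_eq_right h]
    linarith

theorem half_le_one_div_one_add_rpow {t b : ℝ} (ht : 0 ≤ t) (ht1 : t ≤ 1) (hb : 0 ≤ b) :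
    1 / 2 ≤ 1 / (1 + t ^ b) := by
  refine one_div_le_one_div_of_le (by positivity) ?_
  linarith [rpow_le_one ht ht1 hb]

section Weight

variable {E : Type*} [SeminormedAddCommGroup E]

theorem le_max_one_norm_of_mem_ball {x z : E} (hz : z ∈ ball x (max 1 (‖x‖ / 2))) :
    max 1 (‖x‖ / 2) ≤ max 1 ‖z‖ := by
  rcases le_total (‖x‖ / 2) 1 with h | h
  · rw [max_eq_left h]
    exact le_max_left _ _
  · rw [max_eq_right h] at hz ⊢
    rw [mem_ball, dist_eq_norm, norm_sub_rev] at hz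
    linarith [norm_sub_norm_le x z, le_max_right 1 ‖z‖]

theorem max_one_norm_le_two_mul (x : E) : max 1 ‖x‖ ≤ 2 * max 1 (‖x‖ / 2) :=
  max_le (by linarith [le_max_left 1 (‖x‖ / 2)]) (by linarith [le_max_right 1 (‖x‖ / 2)])

theorem preimage_sub_left_ball (x : E) (r : ℝ) : (x - ·) ⁻¹' ball 0 r = ball x r := by
  ext z
  simp [dist_eq_norm, norm_sub_rev]

theorem one_div_max_one_norm_rpow_div_le {a s : ℝ} (ha : 0 ≤ a) (hs : 0 ≤ s) (x z : E) :
    1 / max 1 ‖z‖ ^ a / ‖x - z‖ ^ s ≤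
      1 / max 1 (‖x‖ / 2) ^ a *
          (ball x (max 1 (‖x‖ / 2))).indicator (fun z => 1 / ‖x - z‖ ^ s) z +
        1 / max 1 ‖z‖ ^ a / max 1 (‖x‖ / 2) ^ s := by
  set R := max 1 (‖x‖ / 2)
  have hR : 0 < R := one_pos.trans_le (le_max_left _ _)
  by_cases hz : z ∈ ball x R
  · have hw : 1 / max 1 ‖z‖ ^ a ≤ 1 / R ^ a :=
      one_div_le_one_div_of_le (by positivity)
        (rpow_le_rpow hR.le (le_max_one_norm_of_mem_ball hz) ha)
    rw [indicator_of_mem hz, mul_one_div]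
    exact le_add_of_le_of_nonneg (div_le_div_of_nonneg_right hw (by positivity)) (by positivity)
  · have hxz : R ≤ ‖x - z‖ := by
      rwa [mem_ball, dist_eq_norm, not_lt, norm_sub_rev] at hz
    rw [indicator_of_notMem hz, mul_zero, zero_add]
    exact div_le_div_of_nonneg_left (by positivity) (by positivity) (rpow_le_rpow hR.le hxz hs)

end Weight

section Translation

variable {G : Type*} [NormedAddCommGroup G] [MeasurableSpace G] [MeasurableNeg G]
  [MeasurableAdd G] {μ : Measure G} [μ.IsAddLeftInvariant] [μ.IsNegInvariant]

theorem setIntegral_ball_comp_sub_left (g : G → ℝ) (x : G) (r : ℝ) :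
    ∫ z in ball x r, g (x - z) ∂μ = ∫ z in ball 0 r, g z ∂μ := by
  rw [← preimage_sub_left_ball]
  exact (Measure.measurePreserving_sub_left μ x).setIntegral_preimage_emb
    (MeasurableEquiv.subLeft x).measurableEmbedding g _

theorem integrableOn_ball_comp_sub_left {g : G → ℝ} (x : G) {r : ℝ}
    (hg : IntegrableOn g (ball 0 r) μ) : IntegrableOn (fun z => g (x - z)) (ball x r) μ := by
  rw [← preimage_sub_left_ball]
  exact ((Measure.measurePreserving_sub_left μ x).integrableOn_comp_preimage
    (MeasurableEquiv.subLeft x).measurableEmbedding).2 hg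

end Translation

section Kernel

variable {E : Type*} [NormedAddCommGroup E] [NormedSpace ℝ E] [FiniteDimensional ℝ E]
  [MeasurableSpace E] [BorelSpace E] {μ : Measure E} [μ.IsAddHaarMeasure] {s : ℝ}

theorem integrable_one_div_max_one_norm_rpow {a : ℝ} (ha : finrank ℝ E < a) :
    Integrable (fun z : E => 1 / max 1 ‖z‖ ^ a) μ := by
  have ha0 : 0 ≤ a := (Nat.cast_nonneg _).trans ha.le
  refine ((integrable_one_add_norm ha).const_mul (2 ^ a)).mono'
    (by fun_prop : Measurable fun z : E => 1 / max 1 ‖z‖ ^ a).aestronglyMeasurable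
    (.of_forall fun z => ?_)
  have h1 : 1 + ‖z‖ ≤ 2 * max 1 ‖z‖ := by linarith [le_max_left 1 ‖z‖, le_max_right 1 ‖z‖]
  rw [norm_of_nonneg (by positivity), rpow_neg (by positivity), ← div_eq_mul_inv,
    div_le_div_iff₀ (by positivity) (by positivity), one_mul,
    ← mul_rpow zero_le_two (by positivity)]
  exact rpow_le_rpow (by positivity) h1 ha0

theorem integrableOn_ball_one_div_norm_rpow [Nontrivial E] (hs : s < finrank ℝ E) (r : ℝ) :
    IntegrableOn (fun z : E => 1 / ‖z‖ ^ s) (ball 0 r) μ := by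
  refine integrableOn_ball_of_norm_le_rpow Module.finrank_pos (C := 1) hs
    (.of_forall fun z => ?_)
    (by fun_prop : Measurable fun z : E => 1 / ‖z‖ ^ s).aestronglyMeasurable
  rw [norm_of_nonneg (by positivity), one_mul, one_div, rpow_neg (norm_nonneg z)]

theorem setIntegral_ball_one_div_norm_rpow [Nontrivial E] (hs : s < finrank ℝ E) {r : ℝ}
    (hr : 0 ≤ r) :
    ∫ z in ball (0 : E) r, 1 / ‖z‖ ^ s ∂μ =
      finrank ℝ E * μ.real (ball 0 1) / (finrank ℝ E - s) * r ^ ((finrank ℝ E : ℝ) - s) := by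
  have hball : ∀ z : E, (ball (0 : E) r).indicator (fun z => 1 / ‖z‖ ^ s) z =
      (Iio r).indicator (fun t => 1 / t ^ s) ‖z‖ := fun z => by
    by_cases hz : ‖z‖ < r <;> simp [indicator, hz]
  have hradial :
      ∫ t in Ioi (0 : ℝ), t ^ (finrank ℝ E - 1) • (Iio r).indicator (fun t => 1 / t ^ s) t =
        ∫ t in (0)..r, t ^ ((finrank ℝ E : ℝ) - s - 1) := by
    rw [intervalIntegral.integral_of_le hr, integral_Ioc_eq_integral_Ioo,
      ← Ioi_inter_Iio, ← setIntegral_indicator measurableSet_Iio]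
    refine setIntegral_congr_fun measurableSet_Ioi fun t (ht : 0 < t) => ?_
    by_cases htr : t < r
    · simp only [indicator_of_mem (show t ∈ Iio r from htr), smul_eq_mul]
      rw [← rpow_natCast, Nat.cast_sub Module.finrank_pos, mul_one_div, ← rpow_sub ht]
      push_cast; ring_nf
    · simp [indicator_of_notMem (show t ∉ Iio r from htr)]
  rw [← integral_indicator measurableSet_ball, funext hball, integral_fun_norm_addHaar, hradial,
    integral_rpow (.inl (by linarith)), zero_rpow (by linarith), nsmul_eq_mul, smul_eq_mul]
  rw [show (finrank ℝ E : ℝ) - s - 1 + 1 = finrank ℝ E - s by ring]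
  ring

theorem exists_rieszIntegral_one_div_max_one_norm_rpow_le {a : ℝ} (hs0 : 0 ≤ s)
    (hs : s < finrank ℝ E) (ha : finrank ℝ E < a) :
    ∃ C > 0, ∀ x : E, Integrable (fun z => 1 / max 1 ‖z‖ ^ a / ‖x - z‖ ^ s) μ ∧
      rieszIntegral μ s (fun z => 1 / max 1 ‖z‖ ^ a) x ≤ C / max 1 ‖x‖ ^ s := by
  set n : ℝ := (finrank ℝ E : ℝ)
  have hn : 0 < n := hs0.trans_lt hs
  have : Nontrivial E := Module.nontrivial_of_finrank_pos (R := ℝ) (by simpa [n] using hn)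
  set cB : ℝ := n * μ.real (ball 0 1) / (n - s)
  set w : E → ℝ := fun z => 1 / max 1 ‖z‖ ^ a
  have hB : 0 < μ.real (ball 0 1) :=
    ENNReal.toReal_pos (measure_ball_pos μ 0 one_pos).ne' measure_ball_lt_top.ne
  have hcB : 0 < cB := div_pos (mul_pos hn hB) (by linarith)
  have hw : Integrable w μ := integrable_one_div_max_one_norm_rpow ha
  have hw_nonneg : 0 ≤ ∫ z, w z ∂μ := integral_nonneg fun z => by positivity
  refine ⟨(cB + ∫ z, w z ∂μ) * 2 ^ s, by positivity, fun x => ?_⟩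
  set R := max 1 (‖x‖ / 2)
  have hR1 : 1 ≤ R := le_max_left _ _
  have hR : 0 < R := one_pos.trans_le hR1
  set k : E → ℝ := (ball x R).indicator fun z => 1 / ‖x - z‖ ^ s
  have hk : Integrable k μ := (integrable_indicator_iff measurableSet_ball).2
    (integrableOn_ball_comp_sub_left x (integrableOn_ball_one_div_norm_rpow hs R))
  have hk_int : ∫ z, k z ∂μ = cB * R ^ (n - s) := by
    rw [integral_indicator measurableSet_ball,
      setIntegral_ball_comp_sub_left (fun z => 1 / ‖z‖ ^ s),
      setIntegral_ball_one_div_norm_rpow hs hR.le]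
  have hdom : Integrable (fun z => 1 / R ^ a * k z + w z / R ^ s) μ :=
    (hk.const_mul _).add (hw.div_const _)
  have hle := one_div_max_one_norm_rpow_div_le (a := a) (by linarith) hs0 x
  have hint : Integrable (fun z => w z / ‖x - z‖ ^ s) μ :=
    hdom.mono' (by fun_prop : Measurable fun z => w z / ‖x - z‖ ^ s).aestronglyMeasurable
      (.of_forall fun z => by rw [norm_of_nonneg (by positivity)]; exact hle z)
  refine ⟨hint, ?_⟩
  calc rieszIntegral μ s w x ≤ ∫ z, (1 / R ^ a * k z + w z / R ^ s) ∂μ :=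
        integral_mono hint hdom hle
    _ = (cB * R ^ (n - a) + ∫ z, w z ∂μ) / R ^ s := by
        rw [integral_add (hk.const_mul _) (hw.div_const _), integral_const_mul, integral_div,
          hk_int, rpow_sub hR, rpow_sub hR]
        field_simp
    _ ≤ (cB + ∫ z, w z ∂μ) / R ^ s := by
        gcongr
        exact mul_le_of_le_one_right hcB.le (rpow_le_one_of_one_le_of_nonpos hR1 (by linarith))
    _ ≤ (cB + ∫ z, w z ∂μ) * 2 ^ s / max 1 ‖x‖ ^ s := by
        rw [div_le_div_iff₀ (by positivity) (by positivity), mul_assoc,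
          ← mul_rpow zero_le_two hR.le]
        gcongr
        exact max_one_norm_le_two_mul x

theorem exists_rieszIntegral_one_div_one_add_rpow_comparable {b : ℝ} (hs0 : 0 ≤ s)
    (hs : s < finrank ℝ E) (hb : finrank ℝ E < b) :
    ∃ c > 0, ∃ C > 0, ∀ x : E,
      c / max 1 ‖x‖ ^ s ≤ rieszIntegral μ s (fun y => 1 / (1 + ‖y‖ ^ b)) x ∧
        rieszIntegral μ s (fun y => 1 / (1 + ‖y‖ ^ b)) x ≤ C / max 1 ‖x‖ ^ s := by
  have hV_nonneg : ∀ y : E, 0 ≤ 1 / (1 + ‖y‖ ^ b) := fun y => by positivity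
  have hV_le : ∀ y : E, 1 / (1 + ‖y‖ ^ b) ≤ 1 * (1 / max 1 ‖y‖ ^ b) := fun y => by
    rw [one_mul]
    exact one_div_one_add_rpow_le_one_div_max_one_rpow (norm_nonneg y)
  have : Nontrivial E :=
    Module.nontrivial_of_finrank_pos (R := ℝ) (by exact_mod_cast hs0.trans_lt hs)
  have hB : 0 < μ.real (ball 0 1) :=
    ENNReal.toReal_pos (measure_ball_pos μ 0 one_pos).ne' measure_ball_lt_top.ne
  obtain ⟨C, hC, hw⟩ := exists_rieszIntegral_one_div_max_one_norm_rpow_le (μ := μ) hs0 hs hb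
  refine ⟨1 / 2 * μ.real (ball 0 1) / 2 ^ s, by positivity, C, hC, fun x => ⟨?_, ?_⟩⟩
  · have hint : Integrable (fun y => 1 / (1 + ‖y‖ ^ b) / ‖x - y‖ ^ s) μ :=
      (hw x).1.mono'
        (by fun_prop : Measurable fun y => 1 / (1 + ‖y‖ ^ b) / ‖x - y‖ ^ s).aestronglyMeasurable
        (.of_forall fun y => by
          rw [norm_of_nonneg (by positivity)]
          exact div_le_div_of_nonneg_right (by simpa using hV_le y) (by positivity))
    calc 1 / 2 * μ.real (ball 0 1) / 2 ^ s / max 1 ‖x‖ ^ s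
        = 1 / 2 * μ.real (ball 0 1) / (2 * max 1 ‖x‖) ^ s := by
          rw [mul_rpow zero_le_two (by positivity), div_div]
      _ ≤ _ := le_rieszIntegral_of_le_on_ball hs0 hV_nonneg (fun y hy =>
          half_le_one_div_one_add_rpow (norm_nonneg y) (mem_ball_zero_iff.1 hy).le
            (by linarith [(Nat.cast_nonneg (finrank ℝ E) : (0 : ℝ) ≤ _)])) hint
  · calc _ ≤ 1 * rieszIntegral μ s (fun z => 1 / max 1 ‖z‖ ^ b) x :=
          rieszIntegral_le_mul_of_le hV_nonneg hV_le (hw x).1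
      _ ≤ C / max 1 ‖x‖ ^ s := by rw [one_mul]; exact (hw x).2

end Kernel

/-- For `N ≥ 3`, `b > N`, `V x = 1/(1+|x|^b)`, there is
`C = C(N,b) > 0` with `I₁[(I₁V)²](x) ≤ C · I₁V(x)` for all `x ∈ ℝ^N`,
where `I₁ f(x) = c(N,1) ∫ f(y)/|x-y|^(N-1) dy`. -/
theorem stmt4 (N : ℕ) (hN : 3 ≤ N) (b : ℝ) (hb : (N : ℝ) < b) :
    ∃ C : ℝ, 0 < C ∧
      ∀ x : EuclideanSpace ℝ (Fin N),
        (Real.Gamma (((N : ℝ) - 1) / 2) /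
            (π ^ ((N : ℝ) / 2) * 2 * Real.Gamma (1 / 2))) *
          (∫ z : EuclideanSpace ℝ (Fin N),
            (((Real.Gamma (((N : ℝ) - 1) / 2) /
                (π ^ ((N : ℝ) / 2) * 2 * Real.Gamma (1 / 2))) *
              ∫ y : EuclideanSpace ℝ (Fin N),
                (1 / (1 + ‖y‖ ^ b)) / ‖z - y‖ ^ ((N : ℝ) - 1)) ^ 2) /
              ‖x - z‖ ^ ((N : ℝ) - 1)) ≤
        C * ((Real.Gamma (((N : ℝ) - 1) / 2) /
              (π ^ ((N : ℝ) / 2) * 2 * Real.Gamma (1 / 2))) *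
            ∫ y : EuclideanSpace ℝ (Fin N),
              (1 / (1 + ‖y‖ ^ b)) / ‖x - y‖ ^ ((N : ℝ) - 1)) := by
  have hN3 : (3 : ℝ) ≤ N := by exact_mod_cast hN
  have hdim : (finrank ℝ (EuclideanSpace ℝ (Fin N)) : ℝ) = N := by simp
  set K := Real.Gamma (((N : ℝ) - 1) / 2) / (π ^ ((N : ℝ) / 2) * 2 * Real.Gamma (1 / 2))
  have hK : 0 < K := div_pos (Gamma_pos_of_pos (by linarith))
    (by have := Gamma_pos_of_pos (one_half_pos (α := ℝ)); positivity)
  set s : ℝ := (N : ℝ) - 1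
  set V : EuclideanSpace ℝ (Fin N) → ℝ := fun y => 1 / (1 + ‖y‖ ^ b)
  set I := rieszIntegral (volume : Measure (EuclideanSpace ℝ (Fin N))) s
  obtain ⟨c, hc, C₁, hC₁, hV⟩ := exists_rieszIntegral_one_div_one_add_rpow_comparable
    (μ := volume) (s := s) (b := b) (by linarith) (by linarith) (by linarith)
  obtain ⟨C₂, hC₂, hw⟩ := exists_rieszIntegral_one_div_max_one_norm_rpow_le
    (μ := volume) (a := 2 * s) (s := s) (by linarith) (by linarith) (by linarith)
  have hsq : ∀ z, (K * I V z) ^ 2 ≤ (K * C₁) ^ 2 * (1 / max 1 ‖z‖ ^ (2 * s)) := fun z => by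
    calc (K * I V z) ^ 2 ≤ (K * (C₁ / max 1 ‖z‖ ^ s)) ^ 2 := by
          gcongr
          · exact mul_nonneg hK.le (rieszIntegral_nonneg (fun y => by positivity) z)
          · exact (hV z).2
      _ = (K * C₁) ^ 2 * (1 / max 1 ‖z‖ ^ (2 * s)) := by
          rw [mul_comm 2 s, rpow_mul (by positivity)]
          norm_cast
          ring
  refine ⟨(K * C₁) ^ 2 * C₂ / c, by positivity, fun x => ?_⟩
  show K * I (fun z => (K * I V z) ^ 2) x ≤ _ * (K * I V x)
  calc K * I (fun z => (K * I V z) ^ 2) x ≤ K * ((K * C₁) ^ 2 * (C₂ / max 1 ‖x‖ ^ s)) := by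
        gcongr
        exact (rieszIntegral_le_mul_of_le (fun z => sq_nonneg _) hsq (hw x).1).trans
          (by gcongr; exact (hw x).2)
    _ = (K * C₁) ^ 2 * C₂ / c * (K * (c / max 1 ‖x‖ ^ s)) := by
        field_simp
    _ ≤ (K * C₁) ^ 2 * C₂ / c * (K * I V x) := by
        gcongr
        exact (hV x).1
end
end
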